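/- Let a be a nonzero integer. Then either there exist q ≥ 1 and a Dirichlet character χ mod q with (κ_a(n) : ℂ) = χ(n) for all n ≥ 1, or there exist q ≥ 1 and a Dirichlet character χ mod q with (κ_a(n) : ℂ) = χ(n) · κ_{-1}(n) for all n ≥ 1 (where κ_{-1} is the regular paperfolding sequence). -/

import Mathlib

/-- The Kronecker symbol `κ_a(n) = (a | n)` for `n : ℕ`. -/
def kron (a : ℤ) (n : ℕ) : ℤ :=
  if n = 0 then 0
  else (ZMod.χ₈ (a : ZMod 8)) ^ (padicValNat 2 n) * jacobiSym a (n / 2 ^ padicValNat 2 n)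

/-!
For even `a`, `κ_a` vanishes on even `n` and equals `J(a | n)` on odd `n`, which depends only on
`n mod 4|a|`; so `κ_a` is a Dirichlet character mod `4|a|`. For `a ≡ 1 mod 4`, quadratic
reciprocity gives `κ_a(n) = J(n | |a|)`, a character mod `|a|`. For `a ≡ 3 mod 4`, complete
multiplicativity in `a` gives `κ_a = κ_{-1} κ_{-a}` with `-a ≡ 1 mod 4`.
-/

open ZMod
open scoped NumberTheorySymbols

namespace DirichletCharacter

theorem exists_apply_eq_of_periodic {R : Type*} [CommMonoidWithZero R] {q : ℕ} [NeZero q]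
    {f : ℕ → R} (hf1 : f 1 = 1) (hmul : ∀ m n, f (m * n) = f m * f n)
    (hper : Function.Periodic f q) (hcop : ∀ n, ¬ n.Coprime q → f n = 0) :
    ∃ χ : DirichletCharacter R q, ∀ n : ℕ, χ n = f n := by
  have hmod : ∀ n, f (n % q) = f n := hper.map_mod_nat
  refine ⟨{ toFun := fun x => f x.val, map_one' := ?_, map_mul' := ?_, map_nonunit' := ?_ },
    fun n => ?_⟩
  · simpa [ZMod.val_one_eq_one_mod, hmod] using hf1
  · intro x y
    simp only [ZMod.val_mul, hmod, hmul]
  · intro x hx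
    refine hcop _ fun h => hx ?_
    simpa using (ZMod.isUnit_iff_coprime x.val q).mpr h
  · simp [ZMod.val_natCast, hmod]

end DirichletCharacter

theorem kron_zero (a : ℤ) : kron a 0 = 0 := if_pos rfl

theorem kron_mul_left (a b : ℤ) (n : ℕ) : kron (a * b) n = kron a n * kron b n := by
  unfold kron
  split_ifs
  · simp
  · push_cast
    rw [map_mul, mul_pow, jacobiSym.mul_left]
    ring

theorem kron_mul_right (a : ℤ) (m n : ℕ) : kron a (m * n) = kron a m * kron a n := by
  rcases eq_or_ne m 0 with rfl | hm
  · simp [kron_zero]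
  rcases eq_or_ne n 0 with rfl | hn
  · simp [kron_zero]
  have hdiv : m * n / 2 ^ (padicValNat 2 m + padicValNat 2 n)
      = (m / 2 ^ padicValNat 2 m) * (n / 2 ^ padicValNat 2 n) := by
    rw [pow_add, Nat.div_mul_div_comm pow_padicValNat_dvd pow_padicValNat_dvd]
  have hoddPart : ∀ {k : ℕ}, k ≠ 0 → k / 2 ^ padicValNat 2 k ≠ 0 := fun hk =>
    (Nat.div_ne_zero_iff_of_dvd pow_padicValNat_dvd).mpr ⟨hk, by positivity⟩
  rw [kron, if_neg (mul_ne_zero hm hn), padicValNat.mul hm hn, hdiv, kron, if_neg hm, kron,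
    if_neg hn, jacobiSym.mul_right' _ (hoddPart hm) (hoddPart hn), pow_add]
  ring

theorem kron_two_pow (a : ℤ) (k : ℕ) : kron a (2 ^ k) = χ₈ a ^ k := by
  simp [kron]

theorem kron_of_odd (a : ℤ) {n : ℕ} (hn : Odd n) : kron a n = J(a | n) := by
  have hv : padicValNat 2 n = 0 := padicValNat.eq_zero_of_not_dvd hn.not_two_dvd_nat
  simp [kron, hv, hn.pos.ne']

theorem kron_eq_zero_of_even {a : ℤ} (ha : Even a) {n : ℕ} (hn : Even n) : kron a n = 0 := by
  rcases eq_or_ne n 0 with rfl | hn0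
  · exact kron_zero a
  obtain ⟨k, m, hm, rfl⟩ := Nat.exists_eq_two_pow_mul_odd hn0
  have hk : k ≠ 0 := by
    rintro rfl
    rw [pow_zero, one_mul] at hn
    exact Nat.not_even_iff_odd.mpr hm hn
  have : χ₈ a = 0 := by
    rw [χ₈_int_eq_if_mod_eight, if_pos (Int.even_iff.mp ha)]
  rw [kron_mul_right, kron_two_pow, this, zero_pow hk, zero_mul]

theorem kron_periodic_of_even {a : ℤ} (ha : Even a) :
    Function.Periodic (kron a) (4 * a.natAbs) := by
  intro n
  rcases Nat.even_or_odd n with hn | hn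
  · have hq : Even (4 * a.natAbs) := (even_two_mul 2).mul_right _
    rw [kron_eq_zero_of_even ha hn, kron_eq_zero_of_even ha (hn.add hq)]
  · have hq : Odd (n + 4 * a.natAbs) := hn.add_even ((even_two_mul 2).mul_right _)
    rw [kron_of_odd a hn, kron_of_odd a hq, jacobiSym.mod_right a hn, jacobiSym.mod_right a hq,
      Nat.add_mod_right]

theorem kron_eq_zero_of_even_of_not_coprime {a : ℤ} (ha : Even a) {n : ℕ}
    (hn : ¬ n.Coprime (4 * a.natAbs)) : kron a n = 0 := by
  rcases Nat.even_or_odd n with he | ho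
  · exact kron_eq_zero_of_even ha he
  have h4 : n.Coprime 4 := (Nat.coprime_two_right.mpr ho).pow_right 2
  rw [kron_of_odd a ho, jacobiSym.eq_zero_iff]
  exact ⟨ho.pos.ne', fun h => hn (h4.mul_right (Nat.Coprime.symm h))⟩

theorem jacobiSym.quadratic_reciprocity_one_mod_four_int {b : ℤ} (hb : b % 4 = 1) {m : ℕ}
    (hm : Odd m) : J(b | m) = J(m | b.natAbs) := by
  obtain ⟨B, rfl | rfl⟩ := Int.eq_nat_or_neg b
  · exact jacobiSym.quadratic_reciprocity_one_mod_four (by omega) hm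
  · have hB : B % 4 = 3 := by omega
    rw [Int.natAbs_neg, Int.natAbs_natCast, jacobiSym.neg _ hm,
      jacobiSym.quadratic_reciprocity (Nat.odd_iff.mpr (by omega)) hm,
      pow_mul, neg_one_pow_div_two_of_three_mod_four hB, ← χ₄_eq_neg_one_pow (Nat.odd_iff.mp hm),
      ← mul_assoc]
    rcases Nat.odd_mod_four_iff.mp (Nat.odd_iff.mp hm) with h4 | h4
    · rw [χ₄_nat_one_mod_four h4, mul_one, one_mul]
    · rw [χ₄_nat_three_mod_four h4]; ring

theorem χ₈_int_natAbs (a : ℤ) : χ₈ (a.natAbs : ℤ) = χ₈ a := by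
  rcases Int.natAbs_eq a with h | h <;> conv_rhs => rw [h]
  rw [Int.cast_neg, neg_eq_neg_one_mul, map_mul, show χ₈ (-1) = 1 by decide, one_mul]

theorem kron_eq_jacobiSym_natAbs {b : ℤ} (hb : b % 4 = 1) {n : ℕ} (hn : n ≠ 0) :
    kron b n = J(n | b.natAbs) := by
  have hB : Odd b.natAbs := Int.natAbs_odd.mpr (Int.odd_iff.mpr (by omega))
  obtain ⟨k, m, hm, rfl⟩ := Nat.exists_eq_two_pow_mul_odd hn
  rw [kron_mul_right, kron_two_pow, kron_of_odd _ hm, Nat.cast_mul, Nat.cast_pow,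
    jacobiSym.mul_left, jacobiSym.pow_left, Nat.cast_two, jacobiSym.at_two hB, ← χ₈_int_natAbs,
    jacobiSym.quadratic_reciprocity_one_mod_four_int hb hm]
  rfl

theorem exists_dirichletCharacter_eq_kron_of_even {R : Type*} [CommRing R] {a : ℤ}
    (ha : Even a) [NeZero (4 * a.natAbs)] :
    ∃ χ : DirichletCharacter R (4 * a.natAbs), ∀ n : ℕ, χ n = kron a n :=
  DirichletCharacter.exists_apply_eq_of_periodic (f := fun n => (kron a n : R))
    (by simp [kron_of_odd a odd_one]) (fun m n => by simp [kron_mul_right])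
    (fun n => congrArg _ (kron_periodic_of_even ha n))
    (fun n hn => by simp [kron_eq_zero_of_even_of_not_coprime ha hn])

theorem exists_dirichletCharacter_eq_jacobiSym {R : Type*} [CommRing R] (b : ℕ) [NeZero b] :
    ∃ χ : DirichletCharacter R b, ∀ n : ℕ, χ n = jacobiSym n b :=
  DirichletCharacter.exists_apply_eq_of_periodic (f := fun n => (jacobiSym n b : R))
    (by simp [jacobiSym.one_left]) (fun m n => by simp [jacobiSym.mul_left])
    (fun n => by simp [jacobiSym.mod_left' (Int.add_emod_right (n : ℤ) b)])
    (fun n hn => by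
      rw [jacobiSym.eq_zero_iff_not_coprime.mpr (by rwa [Int.gcd_natCast_natCast]), Int.cast_zero])

theorem kron_eq_character_or_character_mul_paperfolding (a : ℤ) (ha : a ≠ 0) :
    (∃ (q : ℕ), 1 ≤ q ∧ ∃ χ : DirichletCharacter ℂ q,
        ∀ n : ℕ, 1 ≤ n → (kron a n : ℂ) = χ (n : ZMod q)) ∨
    (∃ (q : ℕ), 1 ≤ q ∧ ∃ χ : DirichletCharacter ℂ q,
        ∀ n : ℕ, 1 ≤ n → (kron a n : ℂ) = χ (n : ZMod q) * (kron (-1) n : ℂ)) := by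
  have hA : a.natAbs ≠ 0 := Int.natAbs_ne_zero.mpr ha
  rcases Int.even_or_odd a with heven | hodd
  · have : NeZero (4 * a.natAbs) := ⟨mul_ne_zero four_ne_zero hA⟩
    obtain ⟨χ, hχ⟩ := exists_dirichletCharacter_eq_kron_of_even (R := ℂ) heven
    exact Or.inl ⟨_, NeZero.one_le, χ, fun n _ => (hχ n).symm⟩
  have : NeZero a.natAbs := ⟨hA⟩
  obtain ⟨χ, hχ⟩ := exists_dirichletCharacter_eq_jacobiSym (R := ℂ) a.natAbs
  have ha4 := Int.odd_iff.mp hodd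
  by_cases h1 : a % 4 = 1
  · refine Or.inl ⟨_, NeZero.one_le, χ, fun n hn => ?_⟩
    rw [hχ, kron_eq_jacobiSym_natAbs h1 (by omega)]
  · refine Or.inr ⟨_, NeZero.one_le, χ, fun n hn => ?_⟩
    have hsplit : kron a n = kron (-1) n * kron (-a) n := by
      rw [← kron_mul_left, neg_one_mul, neg_neg]
    rw [hχ, hsplit, kron_eq_jacobiSym_natAbs (b := -a) (by omega) (by omega), Int.natAbs_neg]
    push_cast
    ring
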